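/- arXiv:0910.5070 — 2 statements merged into one kernel-verified Lean document; each statement's English description precedes it below -/
import Mathlib

section
/- Let ρ be a p-bar core with core t-tuple ((ℓ₁,ε₁),…,(ℓ_t,ε_t)) and let λ be a partition in the block of core ρ and weight w. For any Scopes involution K_i (0 ≤ i ≤ t), the p-bar core of K_i(λ) equals K_i(ρ). -/
/-- A partition in `D`: all parts positive, and parts not divisible by `p` are
distinct (parts divisible by `p` may repeat).  Represented as a multiset of parts. -/
def InD (p : ℕ) (M : Multiset ℕ) : Prop :=
  (∀ x ∈ M, 0 < x) ∧ ∀ x : ℕ, ¬ p ∣ x → M.count x ≤ 1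

/-- Removing a `p`-bar: (1) decrease a part by `p`; (2) remove a part equal to `p`;
(3) remove two parts summing to `p`. -/
def BarStep (p : ℕ) (M M' : Multiset ℕ) : Prop :=
  (∃ x : ℕ, 0 < x ∧ (x + p) ∈ M ∧ M' = x ::ₘ M.erase (x + p)) ∨
  (p ∈ M ∧ M' = M.erase p) ∨
  (∃ a b : ℕ, 0 < a ∧ 0 < b ∧ a + b = p ∧ a ∈ M ∧ b ∈ M.erase a ∧
    M' = (M.erase a).erase b)

/-- A `p`-bar removal staying inside `D`. -/
def StepD (p : ℕ) (M M' : Multiset ℕ) : Prop := BarStep p M M' ∧ InD p M'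

/-- A `p`-bar core: an element of `D` from which no `p`-bar can be removed. -/
def IsBarCore (p : ℕ) (M : Multiset ℕ) : Prop :=
  InD p M ∧ ∀ M', ¬ StepD p M M'

/-- The Scopes involution `K_i` for `1 ≤ i ≤ t` on a single part: it interchanges
the beads on runners `i` and `i+1` and on runners `p-i` and `p-i-1`. -/
def Kmap (p i x : ℕ) : ℕ :=
  if x % p = i then x + 1
  else if x % p = i + 1 then x - 1
  else if x % p = p - i - 1 then x + 1
  else if x % p = p - i then x - 1
  else x

/-- The Scopes involution `K_0` on a single part `x ≠ 1`: it interchanges beads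
`ap + 1` (`a > 0`) on runner `1` with beads `bp - 1` on runner `p-1`. -/
def K0map (p x : ℕ) : ℕ :=
  if 1 < x ∧ x % p = 1 then x - 2
  else if x % p = p - 1 then x + 2
  else x

/-- The Scopes involution `K_i` on a partition in `D`; `K_0` in addition removes
the part `1` if present and adds it if absent. -/
def Scopes (p i : ℕ) (M : Multiset ℕ) : Multiset ℕ :=
  if i = 0 then
    if 1 ∈ M then (M.erase 1).map (K0map p)
    else 1 ::ₘ M.map (K0map p)
  else M.map (Kmap p i)

/-! ### Arithmetic helpers -/

lemma mod_helper {p x r : ℕ} (hr : r < p) (q : ℕ) (hx : x = p * q + r) : x % p = r := by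
  subst hx; rw [Nat.mul_add_mod, Nat.mod_eq_of_lt hr]

lemma add_mod' {p x r d : ℕ} (hx : x % p = r) (hrd : r + d < p) : (x + d) % p = r + d := by
  have h := Nat.div_add_mod x p
  exact mod_helper hrd (x / p) (by omega)

lemma sub_mod' {p x r d : ℕ} (hx : x % p = r) (hd : d ≤ r) (hr : r < p) :
    (x - d) % p = r - d := by
  have h := Nat.div_add_mod x p
  exact mod_helper (by omega) (x / p) (by omega)

/-! ### Lemmas about `Kmap` (case `1 ≤ i ≤ t`) -/

section Ki

variable {p t i : ℕ} (hpt : p = 2 * t + 1) (hi1 : 1 ≤ i) (hit : i ≤ t)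
include hpt hi1 hit

lemma kmap_kmap (x : ℕ) : Kmap p i (Kmap p i x) = x := by
  have hple : x % p ≤ x := Nat.mod_le x p
  have hplt : x % p < p := Nat.mod_lt x (by omega)
  by_cases h1 : x % p = i
  · have hv : Kmap p i x = x + 1 := by unfold Kmap; rw [if_pos h1]
    have h5 : (x + 1) % p = i + 1 := add_mod' h1 (by omega)
    rw [hv]; unfold Kmap; rw [h5]; split_ifs <;> omega
  · by_cases h2 : x % p = i + 1
    · have hv : Kmap p i x = x - 1 := by unfold Kmap; rw [if_neg h1, if_pos h2]
      have h5 : (x - 1) % p = i := by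
        have h := sub_mod' (d := 1) h2 (by omega) (by omega)
        rw [h]; omega
      rw [hv]; unfold Kmap; rw [h5]; split_ifs <;> omega
    · by_cases h3 : x % p = p - i - 1
      · have hv : Kmap p i x = x + 1 := by unfold Kmap; rw [if_neg h1, if_neg h2, if_pos h3]
        have h5 : (x + 1) % p = p - i := by
          have := add_mod' h3 (show p - i - 1 + 1 < p by omega)
          rw [this]; omega
        rw [hv]; unfold Kmap; rw [h5]; split_ifs <;> omega
      · by_cases h4 : x % p = p - i
        · have hv : Kmap p i x = x - 1 := by
            unfold Kmap; rw [if_neg h1, if_neg h2, if_neg h3, if_pos h4]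
          have h5 : (x - 1) % p = p - i - 1 := by
            have := sub_mod' h4 (show 1 ≤ p - i by omega) (by omega)
            rw [this]
          rw [hv]; unfold Kmap; rw [h5]; split_ifs <;> omega
        · have hv : Kmap p i x = x := by
            unfold Kmap; rw [if_neg h1, if_neg h2, if_neg h3, if_neg h4]
          rw [hv, hv]

lemma kmap_pos {x : ℕ} (hx : 0 < x) : 0 < Kmap p i x := by
  have hple : x % p ≤ x := Nat.mod_le x p
  unfold Kmap; split_ifs <;> omega

lemma kmap_add_p (x : ℕ) (hx : 0 < x) : Kmap p i (x + p) = Kmap p i x + p := by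
  have hple : x % p ≤ x := Nat.mod_le x p
  have hm : (x + p) % p = x % p := Nat.add_mod_right x p
  unfold Kmap; rw [hm]; split_ifs <;> omega

lemma kmap_p : Kmap p i p = p := by
  have hm : p % p = 0 := Nat.mod_self p
  unfold Kmap; split_ifs <;> omega

lemma kmap_ndvd {x : ℕ} (hx : ¬ p ∣ x) : ¬ p ∣ Kmap p i x := by
  have hp0 : 0 < p := by omega
  rw [Nat.dvd_iff_mod_eq_zero] at hx ⊢
  have hplt : x % p < p := Nat.mod_lt x hp0
  have hple : x % p ≤ x := Nat.mod_le x p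
  unfold Kmap
  split_ifs with h1 h2 h3 h4
  · rw [add_mod' h1 (by omega)]; omega
  · rw [sub_mod' (d := 1) h2 (by omega) (by omega)]; omega
  · rw [add_mod' h3 (by omega)]; omega
  · rw [sub_mod' (d := 1) h4 (by omega) (by omega)]; omega
  · omega

lemma kmap_pair {a b : ℕ} (ha : 0 < a) (hb : 0 < b) (hab : a + b = p) :
    Kmap p i a + Kmap p i b = p := by
  have ha' : a % p = a := Nat.mod_eq_of_lt (by omega)
  have hb' : b % p = b := Nat.mod_eq_of_lt (by omega)
  unfold Kmap; rw [ha', hb']; split_ifs <;> omega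

end Ki

/-! ### Lemmas about `K0map` (case `i = 0`) -/

section K0

variable {p : ℕ} (hp3 : 3 ≤ p)
include hp3

lemma k0_big {x : ℕ} (h1 : 1 < x) (h2 : x % p = 1) : p + 1 ≤ x := by
  have hd := Nat.div_add_mod x p
  rcases Nat.eq_zero_or_pos (x / p) with h | h
  · rw [h] at hd; omega
  · have : p * 1 ≤ p * (x / p) := Nat.mul_le_mul_left p h
    omega

lemma k0_sub2_mod {x : ℕ} (h1 : 1 < x) (h2 : x % p = 1) : (x - 2) % p = p - 1 := by
  have hbig := k0_big hp3 h1 h2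
  have hd := Nat.div_add_mod x p
  have hq : 1 ≤ x / p := by
    rcases Nat.eq_zero_or_pos (x / p) with h | h
    · rw [h] at hd; omega
    · exact h
  refine mod_helper (by omega) (x / p - 1) ?_
  have : p * (x / p - 1) = p * (x / p) - p := by
    rw [Nat.mul_sub]; omega
  omega

lemma k0_add2_mod {x : ℕ} (h2 : x % p = p - 1) : (x + 2) % p = 1 := by
  have hd := Nat.div_add_mod x p
  exact mod_helper (by omega) (x / p + 1) (by
    have : p * (x / p + 1) = p * (x / p) + p := by ring
    omega)

lemma k0_k0 (x : ℕ) : K0map p (K0map p x) = x := by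
  have hplt : x % p < p := Nat.mod_lt x (by omega)
  by_cases h1 : 1 < x ∧ x % p = 1
  · have hbig := k0_big hp3 h1.1 h1.2
    have hv : K0map p x = x - 2 := by unfold K0map; rw [if_pos h1]
    have h5 : (x - 2) % p = p - 1 := k0_sub2_mod hp3 h1.1 h1.2
    rw [hv]; unfold K0map; rw [h5]
    have hle : 1 < x - 2 ∨ True := Or.inr trivial
    split_ifs <;> omega
  · by_cases h2 : x % p = p - 1
    · have hv : K0map p x = x + 2 := by unfold K0map; rw [if_neg h1, if_pos h2]
      have h5 : (x + 2) % p = 1 := k0_add2_mod hp3 h2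
      have hx2 : x % p ≤ x := Nat.mod_le x p
      rw [hv]; unfold K0map; rw [h5]
      split_ifs <;> omega
    · have hv : K0map p x = x := by unfold K0map; rw [if_neg h1, if_neg h2]
      rw [hv, hv]

lemma k0_pos {x : ℕ} (hx : 0 < x) : 0 < K0map p x := by
  unfold K0map
  split_ifs with h1 h2
  · have := k0_big hp3 h1.1 h1.2; omega
  · omega
  · omega

lemma k0_eq_one {x : ℕ} (h : K0map p x = 1) : x = 1 := by
  unfold K0map at h
  split_ifs at h with h1 h2
  · have := k0_big hp3 h1.1 h1.2; omega
  · have hplt : x % p < p := Nat.mod_lt x (by omega)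
    have hx : x % p ≤ x := Nat.mod_le x p
    omega
  · exact h

lemma k0_p : K0map p p = p := by
  have hm : p % p = 0 := Nat.mod_self p
  unfold K0map; split_ifs <;> omega

lemma k0_ndvd {x : ℕ} (hx : ¬ p ∣ x) : ¬ p ∣ K0map p x := by
  rw [Nat.dvd_iff_mod_eq_zero] at hx ⊢
  have hplt : x % p < p := Nat.mod_lt x (by omega)
  by_cases h1 : 1 < x ∧ x % p = 1
  · unfold K0map; rw [if_pos h1, k0_sub2_mod hp3 h1.1 h1.2]; omega
  · by_cases h2 : x % p = p - 1
    · unfold K0map; rw [if_neg h1, if_pos h2, k0_add2_mod hp3 h2]; omega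
    · unfold K0map; rw [if_neg h1, if_neg h2]; omega

lemma k0_add_p {x : ℕ} (hx : 1 < x) : K0map p (x + p) = K0map p x + p := by
  have hm : (x + p) % p = x % p := Nat.add_mod_right x p
  unfold K0map; rw [hm]
  split_ifs <;> omega

lemma k0_fix {a : ℕ} (ha : 0 < a) (ha1 : a ≠ 1) (hap : a + 1 ≠ p) (halt : a < p) :
    K0map p a = a := by
  have h : a % p = a := Nat.mod_eq_of_lt halt
  unfold K0map; split_ifs <;> omega

lemma k0_pm1 : K0map p (p - 1) = p + 1 := by
  have h : (p - 1) % p = p - 1 := Nat.mod_eq_of_lt (by omega)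
  unfold K0map; split_ifs <;> omega

lemma k0_pp1 : K0map p (p + 1) = p - 1 := by
  have h : (p + 1) % p = 1 := mod_helper (by omega) 1 (by omega)
  unfold K0map; split_ifs <;> omega

end K0

/-! ### Generic multiset lemmas -/

lemma InD_erase {p a : ℕ} {M : Multiset ℕ} (hD : InD p M) : InD p (M.erase a) := by
  refine ⟨fun x hx => hD.1 x (Multiset.mem_of_mem_erase hx), fun x hx => ?_⟩
  exact le_trans (Multiset.count_le_of_le x (Multiset.erase_le a M)) (hD.2 x hx)

lemma InD_map {p : ℕ} {f : ℕ → ℕ} (hinv : ∀ x, f (f x) = x)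
    (hpos : ∀ x, 0 < x → 0 < f x) (hnd : ∀ x, ¬ p ∣ x → ¬ p ∣ f x)
    {M : Multiset ℕ} (hD : InD p M) : InD p (M.map f) := by
  have hinj : Function.Injective f := Function.LeftInverse.injective hinv
  constructor
  · intro y hy
    obtain ⟨x, hx, rfl⟩ := Multiset.mem_map.1 hy
    exact hpos x (hD.1 x hx)
  · intro y hy
    have h : y = f (f y) := (hinv y).symm
    rw [h, Multiset.count_map_eq_count' f M hinj]
    exact hD.2 (f y) (hnd y hy)

lemma barStep_map {p : ℕ} {f : ℕ → ℕ} (hinj : Function.Injective f)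
    (hpos : ∀ x, 0 < x → 0 < f x)
    (hadd : ∀ x, 0 < x → f (x + p) = f x + p)
    (hfp : f p = p)
    (hpair : ∀ a b, 0 < a → 0 < b → a + b = p → f a + f b = p)
    {M M' : Multiset ℕ} (h : BarStep p M M') : BarStep p (M.map f) (M'.map f) := by
  rcases h with ⟨x, hx, hmem, rfl⟩ | ⟨hmem, rfl⟩ | ⟨a, b, ha, hb, hab, hma, hmb, rfl⟩
  · refine Or.inl ⟨f x, hpos x hx, ?_, ?_⟩
    · rw [← hadd x hx]; exact Multiset.mem_map_of_mem f hmem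
    · rw [Multiset.map_cons, Multiset.map_erase f hinj, hadd x hx]
  · refine Or.inr (Or.inl ⟨?_, ?_⟩)
    · rw [← hfp]; exact Multiset.mem_map_of_mem f hmem
    · rw [Multiset.map_erase f hinj, hfp]
  · refine Or.inr (Or.inr ⟨f a, f b, hpos a ha, hpos b hb, hpair a b ha hb hab, ?_, ?_, ?_⟩)
    · exact Multiset.mem_map_of_mem f hma
    · rw [← Multiset.map_erase f hinj]; exact Multiset.mem_map_of_mem f hmb
    · rw [Multiset.map_erase f hinj, Multiset.map_erase f hinj]

/-! ### The `i ≥ 1` case assembled -/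

section MainKi

variable {p t i : ℕ} (hpt : p = 2 * t + 1) (hi1 : 1 ≤ i) (hit : i ≤ t)
include hpt hi1 hit

lemma scopes_eq_map (M : Multiset ℕ) : Scopes p i M = M.map (Kmap p i) := by
  unfold Scopes; rw [if_neg (by omega)]

lemma kmap_inj : Function.Injective (Kmap p i) :=
  Function.LeftInverse.injective (kmap_kmap hpt hi1 hit)

lemma InD_scopes_ki {M : Multiset ℕ} (hD : InD p M) : InD p (Scopes p i M) := by
  rw [scopes_eq_map hpt hi1 hit]
  exact InD_map (kmap_kmap hpt hi1 hit) (fun x hx => kmap_pos hpt hi1 hit hx)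
    (fun x hx => kmap_ndvd hpt hi1 hit hx) hD

lemma stepD_scopes_ki {M M' : Multiset ℕ} (h : StepD p M M') :
    StepD p (Scopes p i M) (Scopes p i M') := by
  rw [scopes_eq_map hpt hi1 hit, scopes_eq_map hpt hi1 hit]
  refine ⟨barStep_map (kmap_inj hpt hi1 hit) (fun x hx => kmap_pos hpt hi1 hit hx)
    (fun x hx => kmap_add_p hpt hi1 hit x hx) (kmap_p hpt hi1 hit)
    (fun a b ha hb hab => kmap_pair hpt hi1 hit ha hb hab) h.1, ?_⟩
  exact InD_map (kmap_kmap hpt hi1 hit) (fun x hx => kmap_pos hpt hi1 hit hx)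
    (fun x hx => kmap_ndvd hpt hi1 hit hx) h.2

lemma scopes_scopes_ki {M : Multiset ℕ} : Scopes p i (Scopes p i M) = M := by
  rw [scopes_eq_map hpt hi1 hit, scopes_eq_map hpt hi1 hit, Multiset.map_map]
  have h : (Kmap p i ∘ Kmap p i) = id := funext fun x => kmap_kmap hpt hi1 hit x
  rw [h, Multiset.map_id]

end MainKi

/-! ### The `i = 0` case assembled -/

section MainK0

variable {p : ℕ} (hp3 : 3 ≤ p)
include hp3

lemma k0_inj : Function.Injective (K0map p) :=
  Function.LeftInverse.injective (k0_k0 hp3)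

lemma one_notin_map_k0 {M : Multiset ℕ} (h : 1 ∉ M) : 1 ∉ M.map (K0map p) := by
  intro hmem
  obtain ⟨x, hx, hx1⟩ := Multiset.mem_map.1 hmem
  exact h (k0_eq_one hp3 hx1 ▸ hx)

lemma one_notin_erase_one {M : Multiset ℕ} (hD : InD p M) :
    1 ∉ M.erase 1 := by
  have h := hD.2 1 (by intro h; exact absurd (Nat.le_of_dvd one_pos h) (by omega))
  intro hc
  have h2 := Multiset.count_erase_self 1 M
  have hc' := Multiset.count_pos.2 hc
  omega

lemma InD_scopes_k0 {M : Multiset ℕ} (hD : InD p M) : InD p (Scopes p 0 M) := by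
  unfold Scopes; rw [if_pos rfl]
  by_cases h1 : 1 ∈ M
  · rw [if_pos h1]
    exact InD_map (k0_k0 hp3) (fun x hx => k0_pos hp3 hx) (fun x hx => k0_ndvd hp3 hx)
      (InD_erase hD)
  · rw [if_neg h1]
    have hmap : InD p (M.map (K0map p)) :=
      InD_map (k0_k0 hp3) (fun x hx => k0_pos hp3 hx) (fun x hx => k0_ndvd hp3 hx) hD
    constructor
    · intro x hx
      rcases Multiset.mem_cons.1 hx with rfl | hx
      · omega
      · exact hmap.1 x hx
    · intro x hx
      by_cases hx1 : x = 1
      · subst hx1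
        rw [Multiset.count_cons_self]
        have h2 : 1 ∉ M.map (K0map p) := one_notin_map_k0 hp3 h1
        rw [Multiset.count_eq_zero_of_notMem h2]
      · rw [Multiset.count_cons_of_ne hx1]
        exact hmap.2 x hx

lemma scopes_scopes_k0 {M : Multiset ℕ} (hD : InD p M) : Scopes p 0 (Scopes p 0 M) = M := by
  have hmapmap : ∀ N : Multiset ℕ, (N.map (K0map p)).map (K0map p) = N := by
    intro N
    rw [Multiset.map_map]
    have h : (K0map p ∘ K0map p) = id := funext fun x => k0_k0 hp3 x
    rw [h, Multiset.map_id]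
  unfold Scopes
  rw [if_pos rfl, if_pos rfl]
  by_cases h1 : 1 ∈ M
  · rw [if_pos h1]
    have hnot : 1 ∉ (M.erase 1).map (K0map p) :=
      one_notin_map_k0 hp3 (one_notin_erase_one hp3 hD)
    rw [if_neg hnot, hmapmap, Multiset.cons_erase h1]
  · rw [if_neg h1]
    rw [if_pos (Multiset.mem_cons_self 1 _), Multiset.erase_cons_head, hmapmap]

lemma stepD_scopes_k0 {M M' : Multiset ℕ} (hDM : InD p M) (h : StepD p M M') :
    StepD p (Scopes p 0 M) (Scopes p 0 M') := by
  obtain ⟨hbs, hDM'⟩ := h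
  have hinj : Function.Injective (K0map p) := k0_inj hp3
  refine ⟨?_, InD_scopes_k0 hp3 hDM'⟩
  unfold Scopes
  rw [if_pos rfl, if_pos rfl]
  have hnd1 : ¬ p ∣ 1 := fun h => absurd (Nat.le_of_dvd one_pos h) (by omega)
  rcases hbs with ⟨x, hx, hmem, rfl⟩ | ⟨hmem, rfl⟩ | ⟨a, b, ha, hb, hab, hma, hmb, rfl⟩
  · -- case (1)
    by_cases hx1 : x = 1
    · subst hx1
      -- 1 ∉ M, 1 ∈ M'
      have h1M : 1 ∉ M := by
        intro h1M
        have h1e : 1 ∈ M.erase (1 + p) := (Multiset.mem_erase_of_ne (by omega)).2 h1M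
        have hcount := hDM'.2 1 hnd1
        rw [Multiset.count_cons_self] at hcount
        have := Multiset.count_pos.2 h1e
        omega
      rw [if_neg h1M, if_pos (Multiset.mem_cons_self 1 _), Multiset.erase_cons_head]
      -- BarStep (1 ::ₘ map K0 M) (map K0 (M.erase (1+p))) via pair (1, p-1)
      have hK : K0map p (1 + p) = p - 1 := by
        rw [show 1 + p = p + 1 by ring, k0_pp1 hp3]
      refine Or.inr (Or.inr ⟨1, p - 1, one_pos, by omega, by omega,
        Multiset.mem_cons_self 1 _, ?_, ?_⟩)
      · rw [Multiset.erase_cons_head, ← hK]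
        exact Multiset.mem_map_of_mem _ hmem
      · rw [Multiset.erase_cons_head, ← hK, ← Multiset.map_erase _ hinj]
    · -- x ≠ 1
      have hx2 : 1 < x := by omega
      have hxp1 : (1 : ℕ) ≠ x + p := by omega
      have hiff : (1 ∈ x ::ₘ M.erase (x + p)) ↔ 1 ∈ M := by
        rw [Multiset.mem_cons]
        constructor
        · rintro (h | h)
          · omega
          · exact Multiset.mem_of_mem_erase h
        · intro h
          exact Or.inr ((Multiset.mem_erase_of_ne hxp1).2 h)
      have hK : K0map p (x + p) = K0map p x + p := k0_add_p hp3 hx2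
      have hKpos : 0 < K0map p x := k0_pos hp3 (by omega)
      by_cases h1M : 1 ∈ M
      · rw [if_pos h1M, if_pos (hiff.2 h1M)]
        refine Or.inl ⟨K0map p x, hKpos, ?_, ?_⟩
        · rw [← hK]
          exact Multiset.mem_map_of_mem _ ((Multiset.mem_erase_of_ne (by omega)).2 hmem)
        · rw [← hK, ← Multiset.map_erase _ hinj, ← Multiset.map_cons]
          congr 1
          rw [show (x ::ₘ M.erase (x + p)).erase 1 = x ::ₘ (M.erase (x + p)).erase 1 from
            Multiset.erase_cons_tail _ (by omega), Multiset.erase_comm]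
      · rw [if_neg h1M, if_neg (fun hc => h1M (hiff.1 hc))]
        refine Or.inl ⟨K0map p x, hKpos, ?_, ?_⟩
        · rw [← hK]
          exact Multiset.mem_cons_of_mem (Multiset.mem_map_of_mem _ hmem)
        · have hne : (1 : ℕ) ≠ K0map p (x + p) := by rw [hK]; omega
          rw [Multiset.map_cons, Multiset.map_erase _ hinj, ← hK,
            Multiset.erase_cons_tail _ hne, Multiset.cons_swap]
  · -- case (2)
    have hp1 : (p : ℕ) ≠ 1 := by omega
    have hiff : (1 ∈ M.erase p) ↔ 1 ∈ M := Multiset.mem_erase_of_ne (by omega)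
    by_cases h1M : 1 ∈ M
    · rw [if_pos h1M, if_pos (hiff.2 h1M)]
      refine Or.inr (Or.inl ⟨?_, ?_⟩)
      · have h2 := Multiset.mem_map_of_mem (K0map p)
          ((Multiset.mem_erase_of_ne hp1).2 hmem)
        rw [k0_p hp3] at h2
        exact h2
      · rw [Multiset.erase_comm, Multiset.map_erase _ hinj, k0_p hp3]
    · rw [if_neg h1M, if_neg (fun hc => h1M (hiff.1 hc))]
      refine Or.inr (Or.inl ⟨?_, ?_⟩)
      · have h2 := Multiset.mem_map_of_mem (K0map p) hmem
        rw [k0_p hp3] at h2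
        exact Multiset.mem_cons_of_mem h2
      · rw [Multiset.map_erase _ hinj, k0_p hp3,
          Multiset.erase_cons_tail _ (show (1 : ℕ) ≠ p by omega)]
  · -- case (3)
    by_cases ha1 : a = 1
    · subst ha1
      -- b = p - 1
      have hb' : b = p - 1 := by omega
      subst hb'
      have h1M : 1 ∈ M := hma
      have h1M' : 1 ∉ (M.erase 1).erase (p - 1) := by
        intro hc
        exact one_notin_erase_one hp3 hDM (Multiset.mem_of_mem_erase hc)
      rw [if_pos h1M, if_neg h1M']
      have hK : K0map p (p - 1) = p + 1 := k0_pm1 hp3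
      refine Or.inl ⟨1, one_pos, ?_, ?_⟩
      · rw [show (1 : ℕ) + p = p + 1 by ring, ← hK]
        exact Multiset.mem_map_of_mem _ hmb
      · rw [show (1 : ℕ) + p = p + 1 by ring, ← hK, ← Multiset.map_erase _ hinj]
    · by_cases hb1 : b = 1
      · subst hb1
        have ha' : a = p - 1 := by omega
        subst ha'
        have h1M : 1 ∈ M := Multiset.mem_of_mem_erase hmb
        have h1M' : 1 ∉ (M.erase (p - 1)).erase 1 := by
          rw [Multiset.erase_comm]
          intro hc
          exact one_notin_erase_one hp3 hDM (Multiset.mem_of_mem_erase hc)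
        rw [if_pos h1M, if_neg h1M']
        have hK : K0map p (p - 1) = p + 1 := k0_pm1 hp3
        refine Or.inl ⟨1, one_pos, ?_, ?_⟩
        · rw [show (1 : ℕ) + p = p + 1 by ring, ← hK]
          refine Multiset.mem_map_of_mem _ ?_
          exact (Multiset.mem_erase_of_ne (by omega)).2 hma
        · rw [show (1 : ℕ) + p = p + 1 by ring, ← hK, ← Multiset.map_erase _ hinj,
            Multiset.erase_comm]
      · -- a ≠ 1, b ≠ 1
        have hKa : K0map p a = a := k0_fix hp3 ha ha1 (by omega) (by omega)
        have hKb : K0map p b = b := k0_fix hp3 hb hb1 (by omega) (by omega)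
        have hiff : (1 ∈ (M.erase a).erase b) ↔ 1 ∈ M := by
          constructor
          · intro h
            exact Multiset.mem_of_mem_erase (Multiset.mem_of_mem_erase h)
          · intro h
            exact (Multiset.mem_erase_of_ne (by omega)).2
              ((Multiset.mem_erase_of_ne (by omega)).2 h)
        by_cases h1M : 1 ∈ M
        · rw [if_pos h1M, if_pos (hiff.2 h1M)]
          refine Or.inr (Or.inr ⟨a, b, ha, hb, hab, ?_, ?_, ?_⟩)
          · rw [← hKa]
            exact Multiset.mem_map_of_mem _ ((Multiset.mem_erase_of_ne (by omega)).2 hma)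
          · rw [← hKa, ← Multiset.map_erase _ hinj, ← hKb]
            refine Multiset.mem_map_of_mem _ ?_
            rw [Multiset.erase_comm]
            exact (Multiset.mem_erase_of_ne (by omega)).2 hmb
          · rw [Multiset.erase_comm (M.erase a), Multiset.erase_comm M,
              Multiset.map_erase _ hinj, Multiset.map_erase _ hinj, hKa, hKb]
        · rw [if_neg h1M, if_neg (fun hc => h1M (hiff.1 hc))]
          refine Or.inr (Or.inr ⟨a, b, ha, hb, hab, ?_, ?_, ?_⟩)
          · rw [← hKa]
            exact Multiset.mem_cons_of_mem (Multiset.mem_map_of_mem _ hma)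
          · rw [show (1 ::ₘ M.map (K0map p)).erase a = 1 ::ₘ (M.map (K0map p)).erase a from
              Multiset.erase_cons_tail _ (by omega), ← hKa,
              ← Multiset.map_erase _ hinj, ← hKb]
            exact Multiset.mem_cons_of_mem (Multiset.mem_map_of_mem _ hmb)
          · rw [Multiset.map_erase _ hinj, Multiset.map_erase _ hinj, hKa, hKb,
              Multiset.erase_cons_tail _ (show (1 : ℕ) ≠ a by omega),
              Multiset.erase_cons_tail _ (show (1 : ℕ) ≠ b by omega)]

end MainK0

/-- If `λ ∈ D` has `p`-bar core `ρ` (i.e. `ρ` is a core reachable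
from `λ` by removing `p`-bars), then the `p`-bar core of `K_i(λ)` is `K_i(ρ)`,
for every Scopes involution `K_i`, `0 ≤ i ≤ t`. -/
theorem stmt_13 (p t : ℕ) (hp : p.Prime) (hodd : Odd p) (hpt : p = 2 * t + 1)
    (i : ℕ) (hi : i ≤ t) (lam rho : Multiset ℕ) (hD : InD p lam)
    (hreach : Relation.ReflTransGen (StepD p) lam rho)
    (hcore : IsBarCore p rho) :
    Relation.ReflTransGen (StepD p) (Scopes p i lam) (Scopes p i rho) ∧
      IsBarCore p (Scopes p i rho) := by
  have hp2 : 2 ≤ p := hp.two_le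
  have hp3 : 3 ≤ p := by
    rcases hodd with ⟨k, hk⟩
    omega
  have hstep : ∀ M M', InD p M → StepD p M M' → StepD p (Scopes p i M) (Scopes p i M') := by
    intro M M' hDM h
    rcases Nat.eq_zero_or_pos i with rfl | hi1
    · exact stepD_scopes_k0 hp3 hDM h
    · exact stepD_scopes_ki hpt hi1 hi h
  have hscD : ∀ M, InD p M → InD p (Scopes p i M) := by
    intro M hDM
    rcases Nat.eq_zero_or_pos i with rfl | hi1
    · exact InD_scopes_k0 hp3 hDM
    · exact InD_scopes_ki hpt hi1 hi hDM
  have hinvol : ∀ M, InD p M → Scopes p i (Scopes p i M) = M := by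
    intro M hDM
    rcases Nat.eq_zero_or_pos i with rfl | hi1
    · exact scopes_scopes_k0 hp3 hDM
    · exact scopes_scopes_ki hpt hi1 hi
  have hmain : Relation.ReflTransGen (StepD p) (Scopes p i lam) (Scopes p i rho)
      ∧ InD p rho := by
    clear hcore
    induction hreach with
    | refl => exact ⟨Relation.ReflTransGen.refl, hD⟩
    | tail hab hbc ih =>
        exact ⟨Relation.ReflTransGen.tail ih.1 (hstep _ _ ih.2 hbc), hbc.2⟩
  refine ⟨hmain.1, hscD _ hmain.2, ?_⟩
  intro M' hM'
  have h2 := hstep _ _ (hscD _ hmain.2) hM'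
  rw [hinvol _ hmain.2] at h2
  exact hcore.2 _ h2
end

section
/- Let p be an odd prime with t = (p−1)/2, and consider a p-bar core with core t-tuple satisfying ε_i = 0 for all i, ℓ₁ = w, and ℓ_i = iw − (i−1) for 1 ≤ i ≤ t. Then among all cores with minimum nonzero ℓ value at most w and all consecutive gaps ℓ_{i+1} − ℓ_i at most w−1, this core has the maximal rank, namely (p(w−1)/2 + 1) · Σ_{i=1}^{t}(i²(w−1) + i). -/
/-!
Each summand `ℓ * i + p * ℓ (ℓ - 1) / 2 = ℓ * i + p * C(ℓ, 2)` is increasing in `ℓ ∈ ℕ`, so it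
suffices to bound every coordinate. The coordinate `ℓ_j ≤ w` anchors the sorted sequence, and
gaps of at most `w - 1` then give `ℓ_i ≤ w + (i - 1)(w - 1)` for all `i`, which is exactly
the extremal core; for that core the rank factors by a direct computation.
-/

open Finset

lemma le_add_mul_of_sub_le {ℓ : ℕ → ℕ} {a b d : ℕ}
    (hgap : ∀ i, a ≤ i → i < b → ℓ (i + 1) - ℓ i ≤ d) {i : ℕ} (hai : a ≤ i) (hib : i ≤ b) :
    ℓ i ≤ ℓ a + (i - a) * d := by
  induction i, hai using Nat.le_induction with
  | base => simp
  | succ n han ih =>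
    have hstep := hgap n han (by omega)
    have hn := ih (by omega)
    rw [show n + 1 - a = n - a + 1 by omega, add_one_mul]
    omega

lemma monotoneOn_Icc_of_le_add_one {ℓ : ℕ → ℕ} {a b : ℕ}
    (hsort : ∀ i, a ≤ i → i < b → ℓ i ≤ ℓ (i + 1)) : MonotoneOn ℓ (Set.Icc a b) :=
  monotoneOn_of_le_succ Set.ordConnected_Icc fun n _ hn hn1 => by
    rw [Order.succ_eq_add_one] at hn1 ⊢
    exact hsort n hn.1 (by have := hn1.2; omega)

lemma le_one_add_mul_of_sorted_of_gaps {ℓ : ℕ → ℕ} {t w : ℕ}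
    (hsort : ∀ i, 1 ≤ i → i < t → ℓ i ≤ ℓ (i + 1))
    (hmin : (∃ i ∈ Icc 1 t, 0 < ℓ i) → ∃ i ∈ Icc 1 t, 0 < ℓ i ∧ ℓ i ≤ w)
    (hgap : ∀ i, 1 ≤ i → i < t → ℓ (i + 1) - ℓ i ≤ w - 1) {i : ℕ} (hi : i ∈ Icc 1 t) :
    ℓ i ≤ 1 + i * (w - 1) := by
  by_cases hex : ∃ i ∈ Icc 1 t, 0 < ℓ i
  · obtain ⟨j, hj, -, hjw⟩ := hmin hex
    rw [mem_Icc] at hi hj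
    rcases le_or_gt i j with hij | hji
    · have hmono : ℓ i ≤ ℓ j := monotoneOn_Icc_of_le_add_one hsort hi hj hij
      have : 1 * (w - 1) ≤ i * (w - 1) := Nat.mul_le_mul_right _ hi.1
      omega
    · have hrise := le_add_mul_of_sub_le (a := j) (fun k hk hkt => hgap k (by omega) hkt)
        hji.le hi.2
      have : (i - j + 1) * (w - 1) ≤ i * (w - 1) := Nat.mul_le_mul_right _ (by omega)
      rw [add_one_mul] at this
      omega
  · push Not at hex
    have := hex i hi
    omega

lemma rank_summand_mono {p i : ℚ} (hp : 0 ≤ p) (hi : 0 ≤ i) {x y : ℕ} (hxy : x ≤ y) :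
    (x : ℚ) * i + p * (x * (x - 1)) / 2 ≤ (y : ℚ) * i + p * (y * (y - 1)) / 2 := by
  have hchoose (n : ℕ) : p * (n * (n - 1)) / 2 = p * n.choose 2 := by
    rw [Nat.cast_choose_two]
    ring
  rw [hchoose, hchoose]
  gcongr

lemma extremal_rank_summand (p w i : ℚ) :
    (w + (i - 1) * (w - 1)) * i +
        p * ((w + (i - 1) * (w - 1)) * ((w + (i - 1) * (w - 1)) - 1)) / 2 =
      (p * (w - 1) / 2 + 1) * (i ^ 2 * (w - 1) + i) := by
  ring

theorem stmt_19_general (p t w : ℕ) (hw : 1 ≤ w) :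
    (∑ i ∈ Icc 1 t,
        (((w : ℚ) + ((i : ℚ) - 1) * ((w : ℚ) - 1)) * (i : ℚ) +
          (p : ℚ) * (((w : ℚ) + ((i : ℚ) - 1) * ((w : ℚ) - 1)) *
            (((w : ℚ) + ((i : ℚ) - 1) * ((w : ℚ) - 1)) - 1)) / 2) =
      ((p : ℚ) * ((w : ℚ) - 1) / 2 + 1) *
        ∑ i ∈ Icc 1 t, ((i : ℚ) ^ 2 * ((w : ℚ) - 1) + (i : ℚ))) ∧
    (∀ ℓ : ℕ → ℕ,
      (∀ i, 1 ≤ i → i < t → ℓ i ≤ ℓ (i + 1)) →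
      ((∃ i ∈ Icc 1 t, 0 < ℓ i) → ∃ i ∈ Icc 1 t, 0 < ℓ i ∧ ℓ i ≤ w) →
      (∀ i, 1 ≤ i → i < t → ℓ (i + 1) - ℓ i ≤ w - 1) →
      ∑ i ∈ Icc 1 t,
          ((ℓ i : ℚ) * (i : ℚ) + (p : ℚ) * ((ℓ i : ℚ) * ((ℓ i : ℚ) - 1)) / 2) ≤
        ((p : ℚ) * ((w : ℚ) - 1) / 2 + 1) *
          ∑ i ∈ Icc 1 t, ((i : ℚ) ^ 2 * ((w : ℚ) - 1) + (i : ℚ))) := by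
  have hrank : ∑ i ∈ Icc 1 t,
      (((w : ℚ) + ((i : ℚ) - 1) * ((w : ℚ) - 1)) * (i : ℚ) +
        (p : ℚ) * (((w : ℚ) + ((i : ℚ) - 1) * ((w : ℚ) - 1)) *
          (((w : ℚ) + ((i : ℚ) - 1) * ((w : ℚ) - 1)) - 1)) / 2) =
      ((p : ℚ) * ((w : ℚ) - 1) / 2 + 1) *
        ∑ i ∈ Icc 1 t, ((i : ℚ) ^ 2 * ((w : ℚ) - 1) + (i : ℚ)) := by
    simp only [mul_sum, extremal_rank_summand]
  refine ⟨hrank, fun ℓ hsort hmin hgap => hrank ▸ sum_le_sum fun i hi => ?_⟩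
  have hcast : (((1 + i * (w - 1) : ℕ)) : ℚ) = w + (i - 1) * (w - 1) := by
    push_cast [Nat.cast_sub hw]
    ring
  simpa only [hcast] using rank_summand_mono p.cast_nonneg i.cast_nonneg
    (le_one_add_mul_of_sorted_of_gaps hsort hmin hgap hi)

open Finset in
/-- For an odd prime `p = 2t + 1` and `w ≥ 1`, among all cores with
all `ε_i = 0`, sorted coordinates, minimum nonzero `ℓ`-value at most `w`, and all
consecutive gaps at most `w - 1`, the core with `ℓ_i = iw - (i-1) = w + (i-1)(w-1)`
has the maximal rank `Σᵢ [ℓ_i·i + p·ℓ_i(ℓ_i-1)/2]`, namely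
`(p(w-1)/2 + 1)·Σᵢ(i²(w-1) + i)`. -/
theorem stmt_19 (p t w : ℕ) (hp : p.Prime) (hpt : p = 2 * t + 1) (hw : 1 ≤ w) :
    (∑ i ∈ Icc 1 t,
        (((w : ℚ) + ((i : ℚ) - 1) * ((w : ℚ) - 1)) * (i : ℚ) +
          (p : ℚ) * (((w : ℚ) + ((i : ℚ) - 1) * ((w : ℚ) - 1)) *
            (((w : ℚ) + ((i : ℚ) - 1) * ((w : ℚ) - 1)) - 1)) / 2) =
      ((p : ℚ) * ((w : ℚ) - 1) / 2 + 1) *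
        ∑ i ∈ Icc 1 t, ((i : ℚ) ^ 2 * ((w : ℚ) - 1) + (i : ℚ))) ∧
    (∀ ℓ : ℕ → ℕ,
      (∀ i, 1 ≤ i → i < t → ℓ i ≤ ℓ (i + 1)) →
      ((∃ i ∈ Icc 1 t, 0 < ℓ i) → ∃ i ∈ Icc 1 t, 0 < ℓ i ∧ ℓ i ≤ w) →
      (∀ i, 1 ≤ i → i < t → ℓ (i + 1) - ℓ i ≤ w - 1) →
      ∑ i ∈ Icc 1 t,
          ((ℓ i : ℚ) * (i : ℚ) + (p : ℚ) * ((ℓ i : ℚ) * ((ℓ i : ℚ) - 1)) / 2) ≤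
        ((p : ℚ) * ((w : ℚ) - 1) / 2 + 1) *
          ∑ i ∈ Icc 1 t, ((i : ℚ) ^ 2 * ((w : ℚ) - 1) + (i : ℚ))) :=
  stmt_19_general p t w hw
end
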